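/- arXiv:2311.03014 — 6 statements merged into one kernel-verified Lean document; each statement's English description precedes it below -/
import Mathlib

section
/- Let X ⊆ ℝⁿ be closed and U ⊆ ℝⁿ open with U ∩ X nonempty. Then there exists an open subset U₀ ⊆ U with U₀ ∩ X = U ∩ X such that for every x ∈ U₀ and every a ∈ X realizing the distance of x to X (i.e. dist(x,a) = dist(x,X)), the closed line segment [x,a] is contained in U₀. -/
open Metric

/-- For `X ⊆ ℝⁿ` closed and `U` open with `U ∩ X ≠ ∅`, there is an open
`U₀ ⊆ U` with `U₀ ∩ X = U ∩ X` such that for all `x ∈ U₀` and all `a ∈ X` realizing the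
distance of `x` to `X`, the segment `[x,a]` is contained in `U₀`. -/
theorem stmt0 {n : ℕ} (X U : Set (EuclideanSpace ℝ (Fin n)))
    (hX : IsClosed X) (hU : IsOpen U) (hne : (U ∩ X).Nonempty) :
    ∃ U₀ : Set (EuclideanSpace ℝ (Fin n)), IsOpen U₀ ∧ U₀ ⊆ U ∧ U₀ ∩ X = U ∩ X ∧
      ∀ x ∈ U₀, ∀ a ∈ X, dist x a = Metric.infDist x X → segment ℝ x a ⊆ U₀ := by
  set U₀ : Set (EuclideanSpace ℝ (Fin n)) :=
    {x | ∃ a ∈ U ∩ X, ∃ r : ℝ, 0 < r ∧ ball a r ⊆ U ∧ dist x a + infDist x X < r} with hU₀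
  refine ⟨U₀, ?_, ?_, ?_, ?_⟩
  · have : U₀ = ⋃ (a ∈ U ∩ X) (r : ℝ) (_ : 0 < r ∧ ball a r ⊆ U),
        {x | dist x a + infDist x X < r} := by
      ext x
      simp only [hU₀, Set.mem_setOf_eq, Set.mem_iUnion, exists_prop]
      tauto
    rw [this]
    refine isOpen_iUnion fun a => isOpen_iUnion fun _ => isOpen_iUnion fun r =>
      isOpen_iUnion fun hr => ?_
    exact isOpen_lt (((continuous_id.dist continuous_const).add
      (continuous_infDist_pt X))) continuous_const
  · rintro x ⟨a, ⟨haU, haX⟩, r, hr, hball, hlt⟩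
    exact hball (mem_ball.2 (lt_of_le_of_lt (le_add_of_nonneg_right (infDist_nonneg)) hlt))
  · apply Set.Subset.antisymm
    · rintro x ⟨hx, hxX⟩
      refine ⟨?_, hxX⟩
      obtain ⟨a, ⟨haU, haX⟩, r, hr, hball, hlt⟩ := hx
      exact hball (mem_ball.2 (lt_of_le_of_lt (le_add_of_nonneg_right (infDist_nonneg)) hlt))
    · rintro x ⟨hxU, hxX⟩
      refine ⟨?_, hxX⟩
      obtain ⟨ε, hε, hball⟩ := Metric.isOpen_iff.1 hU x hxU
      exact ⟨x, ⟨hxU, hxX⟩, ε, hε, hball, by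
        simp [dist_self, infDist_zero_of_mem hxX, hε]⟩
  · rintro x ⟨a, haUX, r, hr, hball, hlt⟩ b hbX hdist y hy
    refine ⟨a, haUX, r, hr, hball, ?_⟩
    have h1 : dist x y + dist y b = dist x b := dist_add_dist_of_mem_segment hy
    have h2 : infDist y X ≤ dist y b := infDist_le_dist_of_mem hbX
    have h3 : dist y a ≤ dist y x + dist x a := dist_triangle y x a
    have : dist y a + infDist y X ≤ dist x a + dist x b := by
      rw [dist_comm y x] at h3
      linarith
    rw [hdist] at this
    linarith
end

section
/- Let X ⊆ ℝⁿ be a closed fat set (i.e. X equals the closure of its interior). Let f : interior(X) → ℝ be real analytic, and suppose that for every x ∈ ∂X there is an open neighborhood U_x of x in ℝⁿ and a real analytic function F_x : U_x → ℝ with F_x = f on U_x ∩ interior(X). Then f extends to a real analytic function on an open neighborhood of X in ℝⁿ. -/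
open Topology

/-- gluing local real analytic extensions at boundary points of a closed fat
set with a real analytic function on the interior yields a real analytic extension to an
open neighborhood of `X`. -/
theorem stmt1 {n : ℕ} (X : Set (Fin n → ℝ)) (hX : IsClosed X)
    (hfat : X = closure (interior X))
    (f : (Fin n → ℝ) → ℝ)
    (hf : ∀ x ∈ interior X, AnalyticAt ℝ f x)
    (hbd : ∀ x ∈ frontier X, ∃ U : Set (Fin n → ℝ), IsOpen U ∧ x ∈ U ∧
      ∃ F : (Fin n → ℝ) → ℝ, (∀ y ∈ U, AnalyticAt ℝ F y) ∧
        ∀ y ∈ U ∩ interior X, F y = f y) :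
    ∃ V : Set (Fin n → ℝ), IsOpen V ∧ X ⊆ V ∧
      ∃ G : (Fin n → ℝ) → ℝ, (∀ y ∈ V, AnalyticAt ℝ G y) ∧
        ∀ y ∈ interior X, G y = f y := by
  classical
  choose U hUo hxU F hFa hFe using hbd
  choose r hr hball using fun x hx => Metric.isOpen_iff.1 (hUo x hx) x (hxU x hx)
  have hball3 : ∀ x hx, Metric.ball x (r x hx / 3) ⊆ U x hx := fun x hx =>
    (Metric.ball_subset_ball (by linarith [hr x hx])).trans (hball x hx)
  -- Key: two local extensions agree on the intersection of their small balls.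
  have key : ∀ x (hx : x ∈ frontier X) x' (hx' : x' ∈ frontier X),
      r x' hx' ≤ r x hx → ∀ z, z ∈ Metric.ball x (r x hx / 3) →
      z ∈ Metric.ball x' (r x' hx' / 3) → F x hx z = F x' hx' z := by
    intro x hx x' hx' hle z hz hz'
    have hrx := hr x hx
    have hrx' := hr x' hx'
    rw [Metric.mem_ball] at hz hz'
    set W := Metric.ball x (r x hx) ∩ Metric.ball x' (r x' hx') with hW
    have hxx' : dist x' x < 2 * r x hx / 3 := by
      calc dist x' x ≤ dist x' z + dist z x := dist_triangle _ _ _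
        _ < r x' hx' / 3 + r x hx / 3 := by
            rw [dist_comm x' z]; exact add_lt_add hz' hz
        _ ≤ 2 * r x hx / 3 := by linarith
    have hsub : Metric.ball x' (r x' hx' / 3) ⊆ W := by
      intro w hw
      rw [Metric.mem_ball] at hw
      constructor
      · rw [Metric.mem_ball]
        calc dist w x ≤ dist w x' + dist x' x := dist_triangle _ _ _
          _ < r x' hx' / 3 + 2 * r x hx / 3 := add_lt_add hw hxx'
          _ ≤ r x hx := by linarith
      · exact Metric.mem_ball.2 (by linarith)
    -- pick an interior point of X close to x'
    have hx'X : x' ∈ closure (interior X) := by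
      rw [← hfat]; exact hX.frontier_subset hx'
    obtain ⟨z₀, hz₀int, hz₀d⟩ :=
      Metric.mem_closure_iff.1 hx'X (r x' hx' / 3) (by linarith)
    have hz₀ball : z₀ ∈ Metric.ball x' (r x' hx' / 3) := by
      rw [Metric.mem_ball, dist_comm]; exact hz₀d
    have hOopen : IsOpen (Metric.ball x' (r x' hx' / 3) ∩ interior X) :=
      Metric.isOpen_ball.inter isOpen_interior
    have hEq : Set.EqOn (F x hx) (F x' hx')
        (Metric.ball x' (r x' hx' / 3) ∩ interior X) := by
      intro w hw
      have hw1 : w ∈ U x hx ∩ interior X :=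
        ⟨hball x hx (hsub hw.1).1, hw.2⟩
      have hw2 : w ∈ U x' hx' ∩ interior X :=
        ⟨hball3 x' hx' hw.1, hw.2⟩
      rw [hFe x hx w hw1, hFe x' hx' w hw2]
    have hEv : F x hx =ᶠ[𝓝 z₀] F x' hx' :=
      Filter.eventuallyEq_of_mem (hOopen.mem_nhds ⟨hz₀ball, hz₀int⟩) hEq
    have hFxW : AnalyticOnNhd ℝ (F x hx) W := fun w hw =>
      hFa x hx w (hball x hx hw.1)
    have hFx'W : AnalyticOnNhd ℝ (F x' hx') W := fun w hw =>
      hFa x' hx' w (hball x' hx' hw.2)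
    have hpre : IsPreconnected W :=
      ((convex_ball x (r x hx)).inter (convex_ball x' (r x' hx'))).isPreconnected
    have hz₀W : z₀ ∈ W := hsub hz₀ball
    have hzW : z ∈ W :=
      ⟨Metric.mem_ball.2 (by linarith), Metric.mem_ball.2 (by linarith)⟩
    exact hFxW.eqOn_of_preconnected_of_eventuallyEq hFx'W hpre hz₀W hEv hzW
  -- the glued function
  set G : (Fin n → ℝ) → ℝ := fun y =>
    if hy : y ∈ interior X then f y
    else if h2 : ∃ x, ∃ hx : x ∈ frontier X, y ∈ Metric.ball x (r x hx / 3) then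
      F h2.choose h2.choose_spec.choose y
    else 0 with hG
  have hGint : ∀ y ∈ interior X, G y = f y := fun y hy => dif_pos hy
  -- G agrees with each local extension on its small ball
  have hGF : ∀ x (hx : x ∈ frontier X),
      Set.EqOn G (F x hx) (Metric.ball x (r x hx / 3)) := by
    intro x hx z hz
    by_cases hzi : z ∈ interior X
    · rw [hGint z hzi, hFe x hx z ⟨hball3 x hx hz, hzi⟩]
    · have h2 : ∃ x, ∃ hx : x ∈ frontier X, z ∈ Metric.ball x (r x hx / 3) :=
        ⟨x, hx, hz⟩
      have : G z = F h2.choose h2.choose_spec.choose z := by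
        rw [hG]; simp only [dif_neg hzi, dif_pos h2]
      rw [this]
      obtain hzc := h2.choose_spec.choose_spec
      rcases le_total (r h2.choose h2.choose_spec.choose) (r x hx) with hle | hle
      · exact (key x hx h2.choose h2.choose_spec.choose hle z hz hzc).symm
      · exact key h2.choose h2.choose_spec.choose x hx hle z hzc hz
  refine ⟨interior X ∪ ⋃ x, ⋃ hx : x ∈ frontier X, Metric.ball x (r x hx / 3),
    isOpen_interior.union (isOpen_iUnion fun x => isOpen_iUnion fun hx =>
      Metric.isOpen_ball), ?_, G, ?_, hGint⟩
  · intro y hy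
    by_cases hyi : y ∈ interior X
    · exact Or.inl hyi
    · have hyf : y ∈ frontier X := by
        rw [hX.frontier_eq]; exact ⟨hy, hyi⟩
      exact Or.inr (Set.mem_iUnion.2 ⟨y, Set.mem_iUnion.2
        ⟨hyf, Metric.mem_ball_self (by linarith [hr y hyf])⟩⟩)
  · rintro y (hy | hy)
    · exact (hf y hy).congr (Filter.eventuallyEq_of_mem
        (isOpen_interior.mem_nhds hy) fun z hz => (hGint z hz).symm)
    · obtain ⟨x, hmem⟩ := Set.mem_iUnion.1 hy
      obtain ⟨hx, hyb⟩ := Set.mem_iUnion.1 hmem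
      exact (hFa x hx y (hball3 x hx hyb)).congr (Filter.eventuallyEq_of_mem
        (Metric.isOpen_ball.mem_nhds hyb) fun z hz => (hGF x hx hz).symm)
end

section
/- Let q : ℝⁿ → ℝⁿ be q(x₁,…,xₙ) = (x₁²,…,xₙ²), r > 0, I_r = (−r,r)ⁿ, and Q_r = q(I_r). If f : Q_r → ℝ is a function such that f ∘ q : I_r → ℝ is real analytic, then there exists a real analytic function F defined on an open neighborhood U of 0 in ℝⁿ such that F = f on U ∩ Q_r. -/
/-!
Write the power series `p` of `g = f ∘ q` at `0` in monomials, `g x = ∑_α c_α x^α`. Since `g`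
is invariant under every sign change `x ↦ ε x`, averaging over the `2ⁿ` sign vectors kills every
monomial with an odd exponent, so `g x = ∑_β c_{2β} (x²)^β`. Hence `F y = ∑_β c_{2β} y^β`
satisfies `F (q x) = g x = f (q x)`, and it converges near `0` because its degree-`m` part has
norm at most `n^(3m) ‖p_{2m}‖`.
-/

open Finset
open scoped NNReal ENNReal

section FiberCard

variable {n k m : ℕ}

def fiberCard (D : Fin k → Fin n) (i : Fin n) : ℕ := #{j | D j = i}

lemma sum_fiberCard (D : Fin k → Fin n) : ∑ i, fiberCard D i = k := by
  simpa [fiberCard] using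
    (card_eq_sum_card_fiberwise (f := D) (s := univ) (t := univ) (by simp)).symm

lemma fiberCard_mem_antidiagonalTuple (D : Fin k → Fin n) :
    fiberCard D ∈ Nat.antidiagonalTuple n k :=
  Nat.mem_antidiagonalTuple.2 (sum_fiberCard D)

lemma prod_comp_eq_prod_pow_fiberCard {M : Type*} [CommMonoid M] (v : Fin n → M)
    (D : Fin k → Fin n) : ∏ j, v (D j) = ∏ i, v i ^ fiberCard D i := by
  rw [← prod_fiberwise univ D]
  exact prod_congr rfl fun i _ => prod_eq_pow_card fun j hj => by rw [(mem_filter.1 hj).2]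

lemma exists_fiberCard_eq {β : Fin n → ℕ} (hβ : ∑ i, β i = k) :
    ∃ D : Fin k → Fin n, fiberCard D = β := by
  subst hβ
  refine ⟨fun j => (finSigmaFinEquiv.symm j).1, funext fun i => ?_⟩
  calc fiberCard _ i = #{s : (i : Fin n) × Fin (β i) | s.1 = i} :=
        card_equiv finSigmaFinEquiv.symm (by simp)
    _ = β i := by
        rw [card_filter, Fintype.sum_sigma]
        simp [apply_ite]

lemma sum_div_card_fiberCard {K : Type*} [Semifield K] [CharZero K] (φ : (Fin n → ℕ) → K) :
    ∑ d : Fin m → Fin n, φ (fiberCard d) / #{d' : Fin m → Fin n | fiberCard d' = fiberCard d} =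
      ∑ β ∈ Nat.antidiagonalTuple n m, φ β := by
  rw [← sum_fiberwise_of_maps_to fun d _ => fiberCard_mem_antidiagonalTuple d]
  refine sum_congr rfl fun β hβ => ?_
  obtain ⟨d, hd⟩ := exists_fiberCard_eq (Nat.mem_antidiagonalTuple.1 hβ)
  have hcard : (#{d' : Fin m → Fin n | fiberCard d' = β} : K) ≠ 0 :=
    Nat.cast_ne_zero.2 (card_ne_zero_of_mem (mem_filter.2 ⟨mem_univ d, hd⟩))
  rw [sum_congr rfl fun d' hd' => by rw [(mem_filter.1 hd').2], sum_const, nsmul_eq_mul,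
    mul_div_cancel₀ _ hcard]

lemma filter_even_antidiagonalTuple_of_odd (hk : Odd k) :
    {α ∈ Nat.antidiagonalTuple n k | ∀ i, Even (α i)} = ∅ :=
  filter_false_of_mem fun _ hα hα_even => Nat.not_even_iff_odd.2 hk <|
    Nat.mem_antidiagonalTuple.1 hα ▸ even_sum _ fun i _ => hα_even i

lemma sum_filter_even_antidiagonalTuple_two_mul {M : Type*} [AddCommMonoid M]
    (φ : (Fin n → ℕ) → M) :
    ∑ α ∈ Nat.antidiagonalTuple n (2 * m) with ∀ i, Even (α i), φ α =
      ∑ β ∈ Nat.antidiagonalTuple n m, φ (2 • β) := by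
  have two_nsmul_half : ∀ α : Fin n → ℕ, (∀ i, Even (α i)) → 2 • (fun i => α i / 2) = α :=
    fun α h => funext fun i => by simp [Nat.two_mul_div_two_of_even (h i)]
  refine sum_nbij' (fun α i => α i / 2) (2 • ·) (fun α hα => ?_) (fun β hβ => ?_)
    (fun α hα => two_nsmul_half α (mem_filter.1 hα).2) (fun β _ => funext fun i => by simp)
    (fun α hα => by rw [two_nsmul_half α (mem_filter.1 hα).2])
  · rw [mem_filter, Nat.mem_antidiagonalTuple] at hα
    have hsum := hα.1
    rw [← two_nsmul_half α hα.2] at hsum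
    simp only [Pi.smul_apply, smul_eq_mul, ← mul_sum] at hsum
    rw [Nat.mem_antidiagonalTuple]
    omega
  · rw [Nat.mem_antidiagonalTuple] at hβ
    simp [Nat.mem_antidiagonalTuple, ← mul_sum, hβ]

end FiberCard

section SignVector

variable {R : Type*} {n : ℕ}

def signVector [Monoid R] [HasDistribNeg R] (ε : Fin n → Bool) : Fin n → R :=
  fun i => (-1) ^ (ε i).toNat

lemma signVector_sq [Monoid R] [HasDistribNeg R] (ε : Fin n → Bool) :
    (signVector ε : Fin n → R) ^ 2 = 1 := by
  ext i
  simp [signVector, ← pow_mul']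

lemma enorm_signVector_mul [NormedRing R] (ε : Fin n → Bool) (x : Fin n → R) :
    ‖signVector ε * x‖ₑ = ‖x‖ₑ := by
  simp only [enorm_eq_nnnorm, Pi.nnnorm_def, Pi.mul_apply, signVector]
  congr 2
  ext i
  rcases neg_one_pow_eq_or R (ε i).toNat with h | h <;> simp [h]

lemma sum_prod_signVector_pow [CommRing R] (α : Fin n → ℕ) :
    ∑ ε : Fin n → Bool, ∏ i, (signVector ε i : R) ^ α i =
      if ∀ i, Even (α i) then 2 ^ n else 0 := by
  simp only [signVector]
  rw [← Fintype.prod_sum fun i (b : Bool) => ((-1 : R) ^ b.toNat) ^ α i]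
  simp only [Fintype.sum_bool, Bool.toNat_true, Bool.toNat_false, pow_one, pow_zero, one_pow]
  split_ifs with h
  · rw [prod_congr rfl fun i _ => by rw [(h i).neg_one_pow, one_add_one_eq_two]]
    simp
  · obtain ⟨i, hi⟩ := not_forall.1 h
    exact prod_eq_zero (mem_univ i)
      (by rw [(Nat.not_even_iff_odd.1 hi).neg_one_pow, neg_add_cancel])

end SignVector

namespace ContinuousMultilinearMap

variable {𝕜 : Type*} [NontriviallyNormedField 𝕜] {n k m : ℕ}

def monomialCoeff (u : ContinuousMultilinearMap 𝕜 (fun _ : Fin k => Fin n → 𝕜) 𝕜)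
    (α : Fin n → ℕ) : 𝕜 :=
  ∑ D with fiberCard D = α, u fun j => Pi.single (D j) 1

lemma apply_const_eq_sum_monomialCoeff
    (u : ContinuousMultilinearMap 𝕜 (fun _ : Fin k => Fin n → 𝕜) 𝕜) (x : Fin n → 𝕜) :
    u (fun _ => x) = ∑ α ∈ Nat.antidiagonalTuple n k, u.monomialCoeff α * ∏ i, x i ^ α i := by
  have hx : x = ∑ i, x i • Pi.single i 1 := by
    ext
    simp [Pi.single_apply]
  calc u (fun _ => x) = ∑ D : Fin k → Fin n, u fun j => x (D j) • Pi.single (D j) 1 := by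
        conv_lhs => rw [hx]
        exact u.map_sum _
    _ = ∑ D : Fin k → Fin n, (u fun j => Pi.single (D j) 1) * ∏ i, x i ^ fiberCard D i := by
        simp only [u.map_smul_univ, smul_eq_mul, prod_comp_eq_prod_pow_fiberCard, mul_comm]
    _ = _ := by
        rw [← sum_fiberwise_of_maps_to fun D _ => fiberCard_mem_antidiagonalTuple D]
        refine sum_congr rfl fun α _ => ?_
        rw [monomialCoeff, sum_mul]
        exact sum_congr rfl fun D hD => by rw [(mem_filter.1 hD).2]

lemma norm_monomialCoeff_le (u : ContinuousMultilinearMap 𝕜 (fun _ : Fin k => Fin n → 𝕜) 𝕜)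
    (α : Fin n → ℕ) : ‖u.monomialCoeff α‖ ≤ n ^ k * ‖u‖ :=
  calc ‖u.monomialCoeff α‖ ≤ ∑ D with fiberCard D = α, ‖u‖ :=
        norm_sum_le_of_le _ fun D _ => (u.le_opNorm _).trans_eq (by simp [Pi.norm_single])
    _ ≤ ∑ D : Fin k → Fin n, ‖u‖ :=
        sum_le_sum_of_subset_of_nonneg (filter_subset _ _) fun _ _ _ => norm_nonneg _
    _ = n ^ k * ‖u‖ := by simp

lemma sum_apply_const_signVector_mul
    (u : ContinuousMultilinearMap 𝕜 (fun _ : Fin k => Fin n → 𝕜) 𝕜) (x : Fin n → 𝕜) :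
    ∑ ε : Fin n → Bool, u (fun _ => signVector ε * x) =
      2 ^ n * ∑ α ∈ Nat.antidiagonalTuple n k with ∀ i, Even (α i),
        u.monomialCoeff α * ∏ i, x i ^ α i := by
  simp_rw [apply_const_eq_sum_monomialCoeff, Pi.mul_apply, mul_pow, prod_mul_distrib]
  rw [sum_comm, sum_filter, mul_sum]
  refine sum_congr rfl fun α _ => ?_
  rw [← mul_sum, ← sum_mul, sum_prod_signVector_pow]
  split_ifs <;> ring

def monomial (d : Fin m → Fin n) : ContinuousMultilinearMap 𝕜 (fun _ : Fin m => Fin n → 𝕜) 𝕜 :=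
  (ContinuousMultilinearMap.mkPiAlgebra 𝕜 (Fin m) 𝕜).compContinuousLinearMap
    fun j => ContinuousLinearMap.proj (d j)

@[simp]
lemma monomial_apply (d : Fin m → Fin n) (v : Fin m → Fin n → 𝕜) :
    monomial d v = ∏ j, v j (d j) := by
  simp [monomial]

lemma norm_monomial_le (d : Fin m → Fin n) :
    ‖(monomial d : ContinuousMultilinearMap 𝕜 (fun _ : Fin m => Fin n → 𝕜) 𝕜)‖ ≤ 1 :=
  opNorm_le_bound zero_le_one fun v => by
    rw [one_mul, monomial_apply, norm_prod]
    exact prod_le_prod (fun _ _ => norm_nonneg _) fun j _ => norm_le_pi_norm (v j) (d j)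

end ContinuousMultilinearMap

namespace FormalMultilinearSeries

open ContinuousMultilinearMap

variable {𝕜 : Type*} {n : ℕ}

section NontriviallyNormedField

variable [NontriviallyNormedField 𝕜]

/-- The coefficient `c_{2β}` of `p (2 * m)` is split evenly among the words `d` with
`fiberCard d = β`. -/
def halve (p : FormalMultilinearSeries 𝕜 (Fin n → 𝕜) 𝕜) :
    FormalMultilinearSeries 𝕜 (Fin n → 𝕜) 𝕜 :=
  fun m => ∑ d : Fin m → Fin n,
    ((p (2 * m)).monomialCoeff (2 • fiberCard d) /
      #{d' : Fin m → Fin n | fiberCard d' = fiberCard d}) • monomial d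

variable [CharZero 𝕜]

lemma halve_apply_const (p : FormalMultilinearSeries 𝕜 (Fin n → 𝕜) 𝕜) (m : ℕ) (y : Fin n → 𝕜) :
    p.halve m (fun _ => y) =
      ∑ β ∈ Nat.antidiagonalTuple n m, (p (2 * m)).monomialCoeff (2 • β) * ∏ i, y i ^ β i := by
  rw [← sum_div_card_fiberCard]
  simp only [halve, _root_.sum_apply, _root_.smul_apply, monomial_apply,
    prod_comp_eq_prod_pow_fiberCard, smul_eq_mul, div_mul_eq_mul_div]

theorem hasSum_halve_apply_sq {f : (Fin n → 𝕜) → 𝕜} {p : FormalMultilinearSeries 𝕜 (Fin n → 𝕜) 𝕜}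
    {r : ℝ≥0∞} (hp : HasFPowerSeriesOnBall (fun x => f (x ^ 2)) p 0 r) {x : Fin n → 𝕜}
    (hx : ‖x‖ₑ < r) : HasSum (fun m => p.halve m (fun _ => x ^ 2)) (f (x ^ 2)) := by
  set E : ℕ → 𝕜 := fun k => ∑ α ∈ Nat.antidiagonalTuple n k with ∀ i, Even (α i),
    (p k).monomialCoeff α * ∏ i, x i ^ α i
  have hE : HasSum E (f (x ^ 2)) := by
    have h := hasSum_sum (s := univ) fun (ε : Fin n → Bool) _ => hp.hasSum (y := signVector ε * x)
      (mem_eball_zero_iff.2 (by rwa [enorm_signVector_mul]))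
    simp_rw [zero_add, mul_pow, signVector_sq, one_mul, sum_const, card_univ,
      sum_apply_const_signVector_mul] at h
    rwa [Fintype.card_fun, Fintype.card_bool, Fintype.card_fin, nsmul_eq_mul, Nat.cast_pow,
      Nat.cast_ofNat, hasSum_mul_left_iff (pow_ne_zero n two_ne_zero)] at h
  have hE_odd : ∀ k ∉ Set.range (2 * ·), E k = 0 := fun k hk => by
    rw [Set.mem_range, not_exists] at hk
    have hk_odd : Odd k := Nat.not_even_iff_odd.1 fun ⟨j, hj⟩ => hk j (by omega)
    simp only [E, filter_even_antidiagonalTuple_of_odd hk_odd, sum_empty]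
  rw [← (mul_right_injective₀ two_ne_zero).hasSum_iff hE_odd] at hE
  convert hE using 2 with m
  simp [E, halve_apply_const, sum_filter_even_antidiagonalTuple_two_mul, pow_mul]

end NontriviallyNormedField

variable [RCLike 𝕜]

lemma norm_halve_le (p : FormalMultilinearSeries 𝕜 (Fin n → 𝕜) 𝕜) (m : ℕ) :
    ‖p.halve m‖ ≤ n ^ (3 * m) * ‖p (2 * m)‖ :=
  calc ‖p.halve m‖ ≤ ∑ _d : Fin m → Fin n, n ^ (2 * m) * ‖p (2 * m)‖ := by
        refine norm_sum_le_of_le _ fun d _ => (opNorm_smul_le _ _).trans ?_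
        calc _ ≤ ‖(p (2 * m)).monomialCoeff (2 • fiberCard d)‖ * 1 := by
              gcongr
              · rw [norm_div, RCLike.norm_natCast]
                refine div_le_self (norm_nonneg _) ?_
                exact_mod_cast card_pos.2 ⟨d, by simp⟩
              · exact norm_monomial_le d
          _ ≤ _ := by
              rw [mul_one]
              exact norm_monomialCoeff_le _ _
    _ = n ^ (3 * m) * ‖p (2 * m)‖ := by
        simp only [sum_const, card_univ, Fintype.card_fun, Fintype.card_fin, nsmul_eq_mul]
        push_cast
        ring

theorem le_radius_halve {p : FormalMultilinearSeries 𝕜 (Fin n → 𝕜) 𝕜} {t : ℝ≥0}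
    (ht : (t : ℝ≥0∞) < p.radius) : ((t ^ 2 / (n + 1) ^ 3 : ℝ≥0) : ℝ≥0∞) ≤ p.halve.radius := by
  obtain ⟨C, -, hC⟩ := p.norm_mul_pow_le_of_lt_radius ht
  refine p.halve.le_radius_of_bound C fun m => ?_
  have hn : (n : ℝ) ^ (3 * m) ≤ ((n : ℝ) + 1) ^ (3 * m) := by gcongr; linarith
  calc ‖p.halve m‖ * ((t ^ 2 / (n + 1) ^ 3 : ℝ≥0) : ℝ) ^ m
      ≤ n ^ (3 * m) * ‖p (2 * m)‖ * ((t : ℝ) ^ (2 * m) / ((n : ℝ) + 1) ^ (3 * m)) := by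
        gcongr
        · exact norm_halve_le p m
        · push_cast
          rw [div_pow, pow_mul, pow_mul]
    _ = (n : ℝ) ^ (3 * m) / ((n : ℝ) + 1) ^ (3 * m) * (‖p (2 * m)‖ * t ^ (2 * m)) := by ring
    _ ≤ 1 * C := by
        gcongr
        · exact div_le_one_of_le₀ hn (by positivity)
        · exact hC (2 * m)
    _ = C := one_mul C

end FormalMultilinearSeries

open FormalMultilinearSeries in
theorem exists_analyticOnNhd_eqOn_sq {𝕜 : Type*} [RCLike 𝕜] {n : ℕ} {f : (Fin n → 𝕜) → 𝕜}
    (hf : AnalyticAt 𝕜 (fun x => f (x ^ 2)) 0) :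
    ∃ δ > (0 : ℝ), ∃ F : (Fin n → 𝕜) → 𝕜, AnalyticOnNhd 𝕜 F (Metric.ball 0 δ) ∧
      Set.EqOn F f (Metric.ball 0 δ ∩ Set.range (· ^ 2)) := by
  obtain ⟨p, r, hp⟩ := hf
  obtain ⟨t, ht₀, htr⟩ := ENNReal.lt_iff_exists_nnreal_btwn.1 hp.r_pos
  have ht : 0 < t := by exact_mod_cast ht₀
  set ρ : ℝ≥0 := t ^ 2 / (n + 1) ^ 3
  have hρ₀ : 0 < ρ := by positivity
  have hρ : (ρ : ℝ≥0∞) ≤ p.halve.radius := le_radius_halve (htr.trans_le hp.r_le)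
  have hball : Metric.ball (0 : Fin n → 𝕜) ρ ⊆ Metric.eball 0 p.halve.radius := by
    rw [← Metric.eball_coe]
    exact Metric.eball_subset_eball hρ
  have hF := p.halve.hasFPowerSeriesOnBall (lt_of_lt_of_le (by exact_mod_cast hρ₀) hρ)
  refine ⟨ρ, hρ₀, p.halve.sum, fun y hy => hF.analyticAt_of_mem (hball hy), ?_⟩
  rintro _ ⟨hy, x, rfl⟩
  have hx : ‖x‖ₑ < t := by
    have hρt : ρ ≤ t ^ 2 := div_le_self zero_le (one_le_pow₀ le_add_self)
    rw [enorm_lt_coe, ← NNReal.coe_lt_coe, coe_nnnorm, pi_norm_lt_iff (by positivity)]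
    intro i
    have hxi := (norm_le_pi_norm (x ^ 2) i).trans_lt (mem_ball_zero_iff.1 hy)
    rw [Pi.pow_apply, norm_pow] at hxi
    exact (pow_lt_pow_iff_left₀ (norm_nonneg _) t.2 two_ne_zero).1
      (hxi.trans_le (by exact_mod_cast hρt))
  simpa using (hF.hasSum (hball hy)).unique (hasSum_halve_apply_sq hp (hx.trans htr))

/-- if `f ∘ q` is real analytic on `I_r = (−r,r)ⁿ`, where `q` squares each
coordinate, then `f` has a real analytic extension near `0` agreeing with `f` on
`U ∩ q(I_r)`. -/
theorem stmt5 {n : ℕ} (r : ℝ) (hr : 0 < r)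
    (q : (Fin n → ℝ) → (Fin n → ℝ)) (hq : ∀ x i, q x i = (x i) ^ 2)
    (f : (Fin n → ℝ) → ℝ)
    (hf : ∀ x ∈ {x : Fin n → ℝ | ∀ i, x i ∈ Set.Ioo (-r) r}, AnalyticAt ℝ (f ∘ q) x) :
    ∃ U : Set (Fin n → ℝ), IsOpen U ∧ (0 : Fin n → ℝ) ∈ U ∧
      ∃ F : (Fin n → ℝ) → ℝ, (∀ y ∈ U, AnalyticAt ℝ F y) ∧
        ∀ y ∈ U ∩ (q '' {x : Fin n → ℝ | ∀ i, x i ∈ Set.Ioo (-r) r}), F y = f y := by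
  obtain rfl : q = (· ^ 2) := funext fun x => funext (hq x)
  obtain ⟨δ, hδ, F, hF, hFf⟩ :=
    exists_analyticOnNhd_eqOn_sq (hf 0 fun _ => ⟨neg_lt_zero.2 hr, hr⟩)
  refine ⟨Metric.ball 0 δ, Metric.isOpen_ball, Metric.mem_ball_self hδ, F, hF, ?_⟩
  rintro _ ⟨hy, x, -, rfl⟩
  exact hFf ⟨hy, x, rfl⟩
end

section
/- Let D be a positive integer and p(t) = (t², t^{2D}). Then p(t) ∈ H = {(x,y) : 0 ≤ x ≤ 1, x^D ≤ y ≤ 2x^D} for all t with |t| ≤ 1, and the function t ↦ exp(−1/(t⁴(1 + t^{4(D−1)}))) for t ≠ 0, extended by 0 at t = 0, has no real analytic extension at t = 0. -/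
/-!
Off `0` the function is `expNegInvGlue ∘ d` with `d t = t⁴ (1 + t^{4(D-1)}) > 0`, and both vanish at
`0`. Since `exp (-1/u) = o(uⁿ)` for every `n` and `d t = O(t)`, the composite is `O(tⁿ)` for every
`n`. An analytic function of finite order `n` is `tⁿ` times a germ not vanishing at `0`, so it cannot
be `O(tⁿ⁺¹)`; hence an analytic flat function vanishes near `0`, whereas ours is positive off `0`.
-/

open Filter Topology Asymptotics

theorem AnalyticAt.eventually_eq_zero_of_isBigO_pow {𝕜 E : Type*} [NontriviallyNormedField 𝕜]
    [NormedAddCommGroup E] [NormedSpace 𝕜 E] {f : 𝕜 → E} {x : 𝕜} (hf : AnalyticAt 𝕜 f x)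
    (hflat : ∀ n : ℕ, f =O[𝓝 x] fun t => (t - x) ^ n) : ∀ᶠ t in 𝓝 x, f t = 0 := by
  rw [← analyticOrderAt_eq_top]
  by_contra hord
  obtain ⟨n, hn⟩ := ENat.ne_top_iff_exists.mp hord
  obtain ⟨g, hg, hgx, hfg⟩ := hf.analyticOrderAt_eq_natCast.mp hn.symm
  have hg_eq : g =ᶠ[𝓝[≠] x] fun t => ((t - x) ^ n)⁻¹ • f t := by
    filter_upwards [self_mem_nhdsWithin, hfg.filter_mono nhdsWithin_le_nhds] with t ht hft
    rw [hft, inv_smul_smul₀ (pow_ne_zero _ (sub_ne_zero_of_ne ht))]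
  have hg_bigO : g =O[𝓝[≠] x] fun t => ((t - x) ^ n)⁻¹ • (t - x) ^ (n + 1) :=
    ((isBigO_refl _ _).smul ((hflat (n + 1)).mono nhdsWithin_le_nhds)).congr' hg_eq.symm
      EventuallyEq.rfl
  have hsub : (fun t => ((t - x) ^ n)⁻¹ • (t - x) ^ (n + 1)) =ᶠ[𝓝[≠] x] fun t => t - x := by
    filter_upwards [self_mem_nhdsWithin] with t ht
    rw [smul_eq_mul, pow_succ, inv_mul_cancel_left₀ (pow_ne_zero _ (sub_ne_zero_of_ne ht))]
  have hg_zero : Tendsto g (𝓝[≠] x) (𝓝 0) :=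
    (hg_bigO.congr' EventuallyEq.rfl hsub).trans_tendsto <|
      tendsto_nhdsWithin_of_tendsto_nhds (tendsto_sub_nhds_zero_iff.mpr tendsto_id)
  exact hgx (tendsto_nhds_unique (hg.continuousAt.tendsto.mono_left nhdsWithin_le_nhds) hg_zero)

theorem expNegInvGlue_isLittleO_pow (n : ℕ) : expNegInvGlue =o[𝓝 0] fun x => x ^ n := by
  rw [isLittleO_iff_tendsto' (Eventually.of_forall fun x hx => ?_)]
  · simpa [div_eq_inv_mul, inv_pow] using
      expNegInvGlue.tendsto_polynomial_inv_mul_zero (Polynomial.X ^ n)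
  · simp [eq_zero_of_pow_eq_zero hx]

theorem expNegInvGlue_comp_isBigO_pow {d : ℝ → ℝ} {x : ℝ} (hd : DifferentiableAt ℝ d x)
    (hdx : d x = 0) (n : ℕ) : (expNegInvGlue ∘ d) =O[𝓝 x] fun t => (t - x) ^ n := by
  have hd_bigO : d =O[𝓝 x] fun t => t - x := by simpa [hdx] using hd.isBigO_sub
  have hd_tendsto : Tendsto d (𝓝 x) (𝓝 0) := hdx ▸ hd.continuousAt.tendsto
  exact ((expNegInvGlue_isLittleO_pow n).comp_tendsto hd_tendsto).isBigO.trans (hd_bigO.pow n)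

theorem not_analyticAt_expNegInvGlue_comp {d : ℝ → ℝ} {x : ℝ} (hd : DifferentiableAt ℝ d x)
    (hdx : d x = 0) (hpos : ∃ᶠ t in 𝓝 x, 0 < d t) : ¬ AnalyticAt ℝ (expNegInvGlue ∘ d) x := by
  intro h
  have := h.eventually_eq_zero_of_isBigO_pow (expNegInvGlue_comp_isBigO_pow hd hdx)
  simp only [Function.comp_apply, expNegInvGlue.zero_iff_nonpos] at this
  exact hpos (this.mono fun t ht => ht.not_gt)

theorem stmt12_general (D : ℕ) :
    (∀ t : ℝ, |t| ≤ 1 →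
      0 ≤ (t ^ 2 : ℝ) ∧ t ^ 2 ≤ 1 ∧
      (t ^ 2) ^ D ≤ t ^ (2 * D) ∧ t ^ (2 * D) ≤ 2 * (t ^ 2) ^ D) ∧
    ¬ AnalyticAt ℝ (fun t : ℝ =>
      if t = 0 then 0 else Real.exp (-1 / (t ^ 4 * (1 + t ^ (4 * (D - 1)))))) 0 := by
  refine ⟨fun t ht => ?_, ?_⟩
  · rw [pow_mul]
    have := pow_nonneg (sq_nonneg t) D
    exact ⟨sq_nonneg t, (sq_le_one_iff_abs_le_one t).mpr ht, le_rfl, by linarith⟩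
  set d : ℝ → ℝ := fun t => t ^ 4 * (1 + t ^ (4 * (D - 1)))
  have hd_pos : ∀ t ≠ 0, 0 < d t := fun t ht => by
    have := Even.pow_nonneg (⟨2 * (D - 1), by ring⟩ : Even (4 * (D - 1))) t
    positivity
  have hf : (fun t : ℝ => if t = 0 then 0 else Real.exp (-1 / d t)) = expNegInvGlue ∘ d := by
    funext t
    by_cases ht : t = 0
    · simp [ht, d]
    · simp [ht, expNegInvGlue, (hd_pos t ht).not_ge, neg_div, one_div]
  rw [hf]
  refine not_analyticAt_expNegInvGlue_comp (by fun_prop) (by simp [d]) ?_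
  exact (eventually_nhdsWithin_of_forall (s := {0}ᶜ) hd_pos).frequently.filter_mono
    nhdsWithin_le_nhds

/-- the curve `p(t) = (t², t^{2D})` lies in the horn
`H = {(x,y) : 0 ≤ x ≤ 1, x^D ≤ y ≤ 2x^D}` for `|t| ≤ 1`, and the composite
`t ↦ exp(−1/(t⁴(1 + t^{4(D−1)})))` (extended by `0` at `t = 0`) is not real analytic
at `0`. -/
theorem stmt12 (D : ℕ) (hD : 0 < D) :
    (∀ t : ℝ, |t| ≤ 1 →
      0 ≤ (t ^ 2 : ℝ) ∧ t ^ 2 ≤ 1 ∧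
      (t ^ 2) ^ D ≤ t ^ (2 * D) ∧ t ^ (2 * D) ≤ 2 * (t ^ 2) ^ D) ∧
    ¬ AnalyticAt ℝ (fun t : ℝ =>
      if t = 0 then 0 else Real.exp (-1 / (t ^ 4 * (1 + t ^ (4 * (D - 1)))))) 0 :=
  stmt12_general D
end

section
/- Let X be a closed UPC subset of ℝⁿ with characteristic (m,D): for some M > 0 and every x ∈ X there is a polynomial curve h_x : ℝ → ℝⁿ of degree at most D with h_x(0) = x and dist(h_x(t), ℝⁿ \ X) ≥ M tᵐ for t ∈ [0,1]. Fix x ∈ X, let h = h_x, and let v₂,…,vₙ be unit vectors in ℝⁿ. Define θ(s₁,…,sₙ) = h(s₁) + s₂ᵐ v₂ + ⋯ + sₙᵐ vₙ. Then θ maps the set C = {s ∈ ℝⁿ : 0 ≤ s₁ ≤ 1 and |sᵢ| ≤ (M/(2(n−1)))^{1/m} s₁ for i ≥ 2} into X, and moreover dist(θ(s), ℝⁿ \ X) ≥ (M/2) s₁ᵐ for all s ∈ C. -/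
open Metric Finset

/-!
Adding `s₂ᵐ v₂ + ⋯ + sₙᵐ vₙ` moves `h(s₁)` by at most `(n - 1) · M / (2(n - 1)) · s₁ᵐ = (M/2) s₁ᵐ`,
and the distance to a set is 1-Lipschitz, so half of the clearance `M s₁ᵐ` of `h(s₁)` survives.
For `s₁ > 0` that positive clearance puts `θ(s)` in `X`; for `s₁ = 0` the bound on the shift
is `0`, so `θ(s) = h(0) = x`.
-/

theorem ofReal_sub_dist_le_infEDist {α : Type*} [PseudoMetricSpace α] {S : Set α} {y z : α}
    {r : ℝ} (hr : ENNReal.ofReal r ≤ infEDist y S) :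
    ENNReal.ofReal (r - dist y z) ≤ infEDist z S := by
  rw [ENNReal.ofReal_sub r dist_nonneg, tsub_le_iff_right, ← edist_dist]
  exact hr.trans infEDist_le_infEDist_add_edist

theorem mem_of_ofReal_le_infEDist_compl {α : Type*} [PseudoEMetricSpace α] {X : Set α} {z : α}
    {r : ℝ} (hr : 0 < r) (hz : ENNReal.ofReal r ≤ infEDist z Xᶜ) : z ∈ X := by
  by_contra hzX
  rw [infEDist_zero_of_mem hzX, nonpos_iff_eq_zero, ENNReal.ofReal_eq_zero] at hz
  exact hz.not_gt hr

theorem pow_le_of_abs_le_rpow_inv_mul {m : ℕ} (hm : m ≠ 0) {a c t : ℝ} (hc : 0 ≤ c)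
    (ha : |a| ≤ c ^ ((1 : ℝ) / m) * t) : |a ^ m| ≤ c * t ^ m := by
  have hroot : (c ^ ((1 : ℝ) / m)) ^ m = c := by
    rw [← Real.rpow_natCast, ← Real.rpow_mul hc, one_div_mul_cancel (by exact_mod_cast hm),
      Real.rpow_one]
  calc |a ^ m| = |a| ^ m := abs_pow a m
    _ ≤ (c ^ ((1 : ℝ) / m) * t) ^ m := pow_le_pow_left₀ (abs_nonneg a) ha m
    _ = c * t ^ m := by rw [mul_pow, hroot]

theorem norm_sum_smul_le_card_mul {ι E : Type*} [SeminormedAddCommGroup E] [NormedSpace ℝ E]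
    (S : Finset ι) (a : ι → ℝ) (v : ι → E) {b : ℝ} (hv : ∀ i ∈ S, ‖v i‖ ≤ 1)
    (ha : ∀ i ∈ S, |a i| ≤ b) : ‖∑ i ∈ S, a i • v i‖ ≤ #S * b := by
  refine (norm_sum_le_of_le S fun i hi => ?_).trans (by rw [sum_const, nsmul_eq_mul])
  rw [norm_smul, Real.norm_eq_abs]
  exact (mul_le_of_le_one_right (abs_nonneg _) (hv i hi)).trans (ha i hi)

theorem card_filter_ne_zero_fin (n : ℕ) [NeZero n] :
    (#(univ.filter (· ≠ (0 : Fin n))) : ℝ) = n - 1 := by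
  rw [filter_ne', card_erase_of_mem (mem_univ _), card_univ, Fintype.card_fin,
    Nat.cast_pred (NeZero.pos n)]

theorem mul_div_two_mul_le {k a : ℝ} (hk : 0 ≤ k) (ha : 0 ≤ a) : k * (a / (2 * k)) ≤ a / 2 := by
  rcases hk.eq_or_lt with rfl | hk
  · simp only [mul_zero, div_zero]
    positivity
  · exact (by field_simp : k * (a / (2 * k)) = a / 2).le

theorem stmt14_general {n : ℕ} [NeZero n] (X : Set (EuclideanSpace ℝ (Fin n)))
    (m : ℕ) (hm : 0 < m) (M : ℝ) (hM : 0 < M)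
    (x : EuclideanSpace ℝ (Fin n)) (hx : x ∈ X)
    (h : ℝ → EuclideanSpace ℝ (Fin n))
    (h0 : h 0 = x)
    (hdist : ∀ t ∈ Set.Icc (0 : ℝ) 1,
      ENNReal.ofReal (M * t ^ m) ≤ EMetric.infEdist (h t) Xᶜ)
    (v : Fin n → EuclideanSpace ℝ (Fin n)) (hv : ∀ i, i ≠ 0 → ‖v i‖ = 1)
    (θ : (Fin n → ℝ) → EuclideanSpace ℝ (Fin n))
    (hθ : ∀ s, θ s = h (s 0) + ∑ i ∈ Finset.univ.filter (· ≠ (0 : Fin n)),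
      (s i) ^ m • v i) :
    ∀ s : Fin n → ℝ,
      (0 ≤ s 0 ∧ s 0 ≤ 1 ∧ ∀ i, i ≠ 0 →
        |s i| ≤ (M / (2 * (n - 1))) ^ ((1 : ℝ) / m) * s 0) →
      θ s ∈ X ∧ ENNReal.ofReal (M / 2 * (s 0) ^ m) ≤ EMetric.infEdist (θ s) Xᶜ := by
  rintro s ⟨hs0, hs1, hsi⟩
  have hn : (0 : ℝ) ≤ n - 1 := sub_nonneg.mpr (by exact_mod_cast NeZero.one_le)
  have hshift : ‖∑ i ∈ univ.filter (· ≠ (0 : Fin n)), s i ^ m • v i‖ ≤ M / 2 * s 0 ^ m := by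
    refine (norm_sum_smul_le_card_mul _ _ _ (fun i hi => (hv i (mem_filter.mp hi).2).le)
      fun i hi => pow_le_of_abs_le_rpow_inv_mul hm.ne' (by positivity)
        (hsi i (mem_filter.mp hi).2)).trans ?_
    rw [card_filter_ne_zero_fin, ← mul_assoc]
    exact mul_le_mul_of_nonneg_right (mul_div_two_mul_le hn hM.le) (by positivity)
  have hclear : ENNReal.ofReal (M / 2 * s 0 ^ m) ≤ infEDist (θ s) Xᶜ := by
    refine le_trans (ENNReal.ofReal_le_ofReal ?_)
      (ofReal_sub_dist_le_infEDist (z := θ s) (hdist (s 0) ⟨hs0, hs1⟩))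
    rw [hθ, dist_self_add_right]
    linarith
  refine ⟨?_, hclear⟩
  rcases hs0.eq_or_lt with hzero | hpos
  · rw [← hzero, zero_pow hm.ne', mul_zero, norm_le_zero_iff] at hshift
    rwa [hθ, hshift, add_zero, ← hzero, h0]
  · exact mem_of_ofReal_le_infEDist_compl (by positivity) hclear

/-- if `X` is closed, `h` is a polynomial curve of degree ≤ D with
`h(0) = x ∈ X` and `dist(h(t), ℝⁿ \ X) ≥ M tᵐ` on `[0,1]`, and `v₂,…,vₙ` are unit
vectors, then `θ(s) = h(s₁) + s₂ᵐ v₂ + ⋯ + sₙᵐ vₙ` maps the cone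
`C = {s : 0 ≤ s₁ ≤ 1, |sᵢ| ≤ (M/(2(n−1)))^{1/m} s₁}` into `X` with
`dist(θ(s), ℝⁿ \ X) ≥ (M/2) s₁ᵐ`. -/
theorem stmt14 {n : ℕ} [NeZero n] (hn : 2 ≤ n) (X : Set (EuclideanSpace ℝ (Fin n)))
    (hX : IsClosed X)
    (m D : ℕ) (hm : 0 < m) (hD : 0 < D) (M : ℝ) (hM : 0 < M)
    (x : EuclideanSpace ℝ (Fin n)) (hx : x ∈ X)
    (h : ℝ → EuclideanSpace ℝ (Fin n))
    (hpoly : ∃ q : Fin n → Polynomial ℝ, (∀ i, (q i).natDegree ≤ D) ∧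
      ∀ t i, h t i = (q i).eval t)
    (h0 : h 0 = x)
    (hdist : ∀ t ∈ Set.Icc (0 : ℝ) 1,
      ENNReal.ofReal (M * t ^ m) ≤ EMetric.infEdist (h t) Xᶜ)
    (v : Fin n → EuclideanSpace ℝ (Fin n)) (hv : ∀ i, i ≠ 0 → ‖v i‖ = 1)
    (θ : (Fin n → ℝ) → EuclideanSpace ℝ (Fin n))
    (hθ : ∀ s, θ s = h (s 0) + ∑ i ∈ Finset.univ.filter (· ≠ (0 : Fin n)),
      (s i) ^ m • v i) :
    ∀ s : Fin n → ℝ,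
      (0 ≤ s 0 ∧ s 0 ≤ 1 ∧ ∀ i, i ≠ 0 →
        |s i| ≤ (M / (2 * (n - 1))) ^ ((1 : ℝ) / m) * s 0) →
      θ s ∈ X ∧ ENNReal.ofReal (M / 2 * (s 0) ^ m) ≤ EMetric.infEdist (θ s) Xᶜ :=
  stmt14_general X m hm M hM x hx h h0 hdist v hv θ hθ
end

section
/- Let X = {(x,y) ∈ ℝ² : x³ = y²} and φ(x,y) = y^{1/3}. For every m ≥ 1, a function f : X → ℝ has the property that f ∘ p is real analytic at 0 for every polynomial m-plot p in X if and only if f = g ∘ φ for some real analytic function g : ℝ → ℝ. -/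
/-! A polynomial plot `p = (q₁, q₂)` of the cusp `x³ = y²` satisfies `q₁³ = q₂²` as polynomials
(analytic continuation). Then `q₁² ∣ q₂²`, so `q₂ = q₁ r` in the integrally closed polynomial
ring, whence `p = (r², r³)` and `f ∘ p = g ∘ r` is analytic. Conversely the plots
`x ↦ ((t₀ + xᵢ)², (t₀ + xᵢ)³)` show that `g t = f (t², t³)` is analytic at every `t₀`. -/

open Topology Filter

/-- The real cube root. -/
noncomputable def realCbrt (y : ℝ) : ℝ :=
  if 0 ≤ y then y ^ ((1 : ℝ) / 3) else -((-y) ^ ((1 : ℝ) / 3))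

theorem pow_three_realCbrt (y : ℝ) : realCbrt y ^ 3 = y := by
  have hroot {s : ℝ} (hs : 0 ≤ s) : (s ^ ((1 : ℝ) / 3)) ^ 3 = s := by
    simpa using Real.rpow_inv_natCast_pow hs (n := 3) three_ne_zero
  unfold realCbrt
  split_ifs with hy
  · exact hroot hy
  · rw [neg_pow, hroot (by linarith)]
    ring

theorem realCbrt_pow_three (t : ℝ) : realCbrt (t ^ 3) = t :=
  (Odd.pow_inj (by decide : Odd 3)).mp (pow_three_realCbrt _)

theorem eq_realCbrt_sq_realCbrt_pow_three {z : ℝ × ℝ} (hz : z.1 ^ 3 = z.2 ^ 2) :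
    z = (realCbrt z.2 ^ 2, realCbrt z.2 ^ 3) := by
  have h₂ := pow_three_realCbrt z.2
  refine Prod.ext ((Odd.pow_inj (by decide : Odd 3)).mp ?_) h₂.symm
  linear_combination hz - (realCbrt z.2 ^ 3 + z.2) * h₂

theorem IsIntegrallyClosed.exists_pow_two_eq_and_pow_three_eq {R : Type*} [CommRing R]
    [IsDomain R] [IsIntegrallyClosed R] {a b : R} (h : a ^ 3 = b ^ 2) :
    ∃ r, r ^ 2 = a ∧ r ^ 3 = b := by
  rcases eq_or_ne a 0 with rfl | ha
  · refine ⟨0, by simp, ?_⟩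
    rw [zero_pow three_ne_zero] at h ⊢
    exact (pow_eq_zero_iff two_ne_zero).mp h.symm |>.symm
  obtain ⟨r, rfl⟩ : a ∣ b :=
    (IsIntegrallyClosed.pow_dvd_pow_iff two_ne_zero).mp ⟨a, by rw [← h]; ring⟩
  have hr : r ^ 2 = a := mul_left_cancel₀ (pow_ne_zero 2 ha) (by linear_combination -h)
  exact ⟨r, hr, by rw [← hr]; ring⟩

theorem MvPolynomial.eq_of_eval_eventuallyEq {𝕜 σ : Type*} [RCLike 𝕜] [Fintype σ]
    {p q : MvPolynomial σ 𝕜} {x₀ : σ → 𝕜}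
    (h : (eval · p) =ᶠ[𝓝 x₀] (eval · q)) : p = q :=
  MvPolynomial.funext <| congrFun <|
    (AnalyticOnNhd.eval_mvPolynomial p).eq_of_eventuallyEq (AnalyticOnNhd.eval_mvPolynomial q) h

theorem AnalyticAt.of_comp_add_apply {𝕜 ι F : Type*} [NontriviallyNormedField 𝕜] [Fintype ι]
    [NormedAddCommGroup F] [NormedSpace 𝕜 F] {g : 𝕜 → F} {t₀ : 𝕜} (i : ι)
    (h : AnalyticAt 𝕜 (fun x : ι → 𝕜 => g (t₀ + x i)) 0) : AnalyticAt 𝕜 g t₀ := by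
  have hshift : AnalyticAt 𝕜 (fun t : 𝕜 => fun _ : ι => t - t₀) t₀ :=
    AnalyticAt.pi fun _ => analyticAt_id.sub analyticAt_const
  simpa [Function.comp_def] using h.comp_of_eq hshift (by ext; simp)

/-- for `X = {(x,y) : x³ = y²}` and `φ(x,y) = y^{1/3}`, a function
`f : X → ℝ` has real analytic composites with all polynomial `m`-plots in `X` if and only
if `f = g ∘ φ` on `X` for some real analytic `g : ℝ → ℝ`. -/
theorem stmt19 (m : ℕ) (hm : 0 < m) (f : ℝ × ℝ → ℝ) :
    (∀ p : (Fin m → ℝ) → ℝ × ℝ,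
      (∃ q₁ q₂ : MvPolynomial (Fin m) ℝ,
        ∀ x, p x = (MvPolynomial.eval x q₁, MvPolynomial.eval x q₂)) →
      (∀ᶠ x in 𝓝 (0 : Fin m → ℝ), (p x).1 ^ 3 = (p x).2 ^ 2) →
      AnalyticAt ℝ (f ∘ p) 0)
    ↔ ∃ g : ℝ → ℝ, (∀ t : ℝ, AnalyticAt ℝ g t) ∧
        ∀ z : ℝ × ℝ, z.1 ^ 3 = z.2 ^ 2 → f z = g (realCbrt z.2) := by
  constructor
  · intro H
    refine ⟨fun t => f (t ^ 2, t ^ 3), fun t₀ => ?_,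
      fun z hz => congrArg f (eq_realCbrt_sq_realCbrt_pow_three hz)⟩
    let i : Fin m := ⟨0, hm⟩
    exact AnalyticAt.of_comp_add_apply i <|
      H _ ⟨(.C t₀ + .X i) ^ 2, (.C t₀ + .X i) ^ 3, fun x => by simp⟩ (.of_forall fun x => by ring)
  · rintro ⟨g, hg, hfg⟩ p ⟨q₁, q₂, hpq⟩ hcusp
    have hq : q₁ ^ 3 = q₂ ^ 2 :=
      MvPolynomial.eq_of_eval_eventuallyEq (hcusp.mono fun x hx => by simpa [hpq] using hx)
    obtain ⟨r, rfl, rfl⟩ := IsIntegrallyClosed.exists_pow_two_eq_and_pow_three_eq hq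
    have hfp : f ∘ p = g ∘ (MvPolynomial.eval · r) := funext fun x => by
      rw [Function.comp_apply, hfg _ (by simp only [hpq, map_pow]; ring), hpq]
      simp [realCbrt_pow_three]
    rw [hfp]
    exact (hg _).comp (AnalyticOnNhd.eval_mvPolynomial r 0 trivial)
end
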